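/- arXiv:1609.07581 — 3 statements merged into one kernel-verified Lean document; each statement's English description precedes it below -/
import Mathlib

section
/- Let ρ be a density matrix on ℂ^{d_A} ⊗ ℂ^{d_B}, let E_A = {E_{a|x}} be an Alice POVM family on ℂ^{d_A} and E_B = {E_{b|y}} a Bob POVM family on ℂ^{d_B}, and let B = {B_{ab|xy}} be a Bell functional with nonnegative coefficients and ω(B) > 0. Let P be the quantum correlation P(a,b|x,y) = tr[ρ (E_{a|x} ⊗ E_{b|y})], and let F_(B;E_B) be the induced steering functional with F_{a|x} = ∑_{b,y} B_{ab|xy} E_{b|y} (assume ω_s(F_(B;E_B)) > 0). Then the nonlocality fraction is bounded by the steering fraction: Γ(P, B) ≤ Γ_s({ρ, E_A}, F_(B;E_B)). -/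
open scoped ComplexOrder Kronecker Matrix
open MeasureTheory

noncomputable section

namespace QSteer

/-- Square complex matrices indexed by `ι` (the Hilbert space `ℂ^ι`). -/
abbrev HMat (ι : Type) : Type := Matrix ι ι ℂ

/-- A density matrix: positive semidefinite with unit trace. -/
def IsDensity {ι : Type} [Fintype ι] (ρ : HMat ι) : Prop :=
  ρ.PosSemidef ∧ ρ.trace = 1

/-- A POVM family `{E_{a|x}}`: positive semidefinite effects summing to the identity
for every setting `x`. -/
def IsPOVM {ι A X : Type} [Fintype ι] [Fintype A] [DecidableEq ι]
    (E : A → X → HMat ι) : Prop :=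
  (∀ a x, (E a x).PosSemidef) ∧ ∀ x, ∑ a, E a x = 1

/-- A projective measurement family: a POVM family whose effects are orthogonal
projections. -/
def IsProjPOVM {ι A X : Type} [Fintype ι] [Fintype A] [DecidableEq ι]
    (E : A → X → HMat ι) : Prop :=
  IsPOVM E ∧ ∀ a x, (E a x).IsHermitian ∧ E a x * E a x = E a x

/-- An assemblage `{σ_{a|x}}`: positive semidefinite matrices such that `∑_a σ_{a|x}`
is the same unit-trace matrix for every `x`. -/
def IsAssemblage {ι A X : Type} [Fintype ι] [Fintype A] (σ : A → X → HMat ι) : Prop :=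
  (∀ a x, (σ a x).PosSemidef) ∧ (∀ x x', ∑ a, σ a x = ∑ a, σ a x') ∧
    ∀ x, (∑ a, σ a x).trace = 1

/-- An unsteerable assemblage: one admitting a local-hidden-state model. -/
def IsUnsteerable {ι A X : Type} [Fintype ι] [Fintype A] (σ : A → X → HMat ι) : Prop :=
  ∃ (n : ℕ) (w : Fin n → ℝ) (p : A → X → Fin n → ℝ) (τ : Fin n → HMat ι),
    (∀ l, 0 ≤ w l) ∧ (∑ l, w l = 1) ∧
    (∀ a x l, 0 ≤ p a x l) ∧ (∀ x l, ∑ a, p a x l = 1) ∧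
    (∀ l, IsDensity (τ l)) ∧
    ∀ a x, σ a x = ∑ l, (w l * p a x l) • τ l

/-- A steering functional `{F_{a|x}}`: a family of positive semidefinite matrices. -/
def IsSteeringFunctional {ι A X : Type} [Fintype ι] (F : A → X → HMat ι) : Prop :=
  ∀ a x, (F a x).PosSemidef

/-- The value `∑_{a,x} tr(F_{a|x} σ_{a|x})` (real part). -/
def steeringValue {ι A X : Type} [Fintype ι] [Fintype A] [Fintype X]
    (F σ : A → X → HMat ι) : ℝ :=
  ∑ x, ∑ a, ((F a x * σ a x).trace).re

/-- The steering bound `ω_s(F)`. -/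
def steeringBound {ι A X : Type} [Fintype ι] [Fintype A] [Fintype X]
    (F : A → X → HMat ι) : ℝ :=
  sSup {r : ℝ | ∃ σ : A → X → HMat ι, IsAssemblage σ ∧ IsUnsteerable σ ∧
    r = steeringValue F σ}

/-- The steering fraction `Γ_s(σ, F)`. -/
def steeringFraction {ι A X : Type} [Fintype ι] [Fintype A] [Fintype X]
    (σ F : A → X → HMat ι) : ℝ :=
  steeringValue F σ / steeringBound F

/-- Partial trace over the first (Alice's) tensor factor. -/
def ptraceA {ιA ιB : Type} [Fintype ιA] (M : Matrix (ιA × ιB) (ιA × ιB) ℂ) : HMat ιB :=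
  Matrix.of fun j j' => ∑ i, M (i, j) (i, j')

/-- The assemblage induced by a bipartite state and Alice's POVMs:
`σ_{a|x} = Tr_A[ρ (E_{a|x} ⊗ I)]`. -/
def inducedAssemblage {ιA ιB A X : Type} [Fintype ιA] [Fintype ιB] [DecidableEq ιB]
    (ρ : Matrix (ιA × ιB) (ιA × ιB) ℂ) (E : A → X → HMat ιA) : A → X → HMat ιB :=
  fun a x => ptraceA (ρ * ((E a x) ⊗ₖ (1 : HMat ιB)))

/-- Largest steering-inequality violation `LV_s(ρ, F)` over Alice POVM families. -/
def LVs {ιA ιB A X : Type} [Fintype ιA] [Fintype ιB] [DecidableEq ιA] [DecidableEq ιB]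
    [Fintype A] [Fintype X]
    (ρ : Matrix (ιA × ιB) (ιA × ιB) ℂ) (F : A → X → HMat ιB) : ℝ :=
  sSup {r : ℝ | ∃ E : A → X → HMat ιA, IsPOVM E ∧
    r = steeringFraction (inducedAssemblage ρ E) F}

/-- Largest steering-inequality violation `LV_s^π(ρ, F)` over projective Alice families. -/
def LVsProj {ιA ιB A X : Type} [Fintype ιA] [Fintype ιB] [DecidableEq ιA] [DecidableEq ιB]
    [Fintype A] [Fintype X]
    (ρ : Matrix (ιA × ιB) (ιA × ιB) ℂ) (F : A → X → HMat ιB) : ℝ :=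
  sSup {r : ℝ | ∃ E : A → X → HMat ιA, IsProjPOVM E ∧
    r = steeringFraction (inducedAssemblage ρ E) F}

/-- The maximally entangled state `|Ψ⁺⟩⟨Ψ⁺|` on `ℂ^ι ⊗ ℂ^ι`. -/
def maxEnt (ι : Type) [Fintype ι] [DecidableEq ι] : Matrix (ι × ι) (ι × ι) ℂ :=
  Matrix.of fun pq rs => if pq.1 = pq.2 ∧ rs.1 = rs.2 then ((Fintype.card ι : ℂ))⁻¹ else 0

/-- The fully entangled fraction `F(ρ) = sup_U ⟨Ψ⁺|(U ⊗ I) ρ (U ⊗ I)†|Ψ⁺⟩`. -/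
def fef {ι : Type} [Fintype ι] [DecidableEq ι] (ρ : Matrix (ι × ι) (ι × ι) ℂ) : ℝ :=
  sSup {r : ℝ | ∃ U : Matrix ι ι ℂ, U ∈ Matrix.unitaryGroup ι ℂ ∧
    r = ((maxEnt ι * ((U ⊗ₖ (1 : HMat ι)) * ρ * ((U ⊗ₖ (1 : HMat ι))ᴴ))).trace).re}

/-- A local-hidden-variable (Bell-local) correlation. -/
def IsLHV {A B X Y : Type} [Fintype A] [Fintype B] (P : A → B → X → Y → ℝ) : Prop :=
  ∃ (n : ℕ) (w : Fin n → ℝ) (pA : A → X → Fin n → ℝ) (pB : B → Y → Fin n → ℝ),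
    (∀ l, 0 ≤ w l) ∧ (∑ l, w l = 1) ∧
    (∀ a x l, 0 ≤ pA a x l) ∧ (∀ x l, ∑ a, pA a x l = 1) ∧
    (∀ b y l, 0 ≤ pB b y l) ∧ (∀ y l, ∑ b, pB b y l = 1) ∧
    ∀ a b x y, P a b x y = ∑ l, w l * pA a x l * pB b y l

/-- The Bell value `∑ B_{ab|xy} P(a,b|x,y)`. -/
def bellValue {A B X Y : Type} [Fintype A] [Fintype B] [Fintype X] [Fintype Y]
    (Bf P : A → B → X → Y → ℝ) : ℝ :=
  ∑ x, ∑ y, ∑ a, ∑ b, Bf a b x y * P a b x y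

/-- The local bound `ω(B)`. -/
def localBound {A B X Y : Type} [Fintype A] [Fintype B] [Fintype X] [Fintype Y]
    (Bf : A → B → X → Y → ℝ) : ℝ :=
  sSup {r : ℝ | ∃ P : A → B → X → Y → ℝ, IsLHV P ∧ r = bellValue Bf P}

/-- The nonlocality fraction `Γ(P, B)`. -/
def nonlocalityFraction {A B X Y : Type} [Fintype A] [Fintype B] [Fintype X] [Fintype Y]
    (P Bf : A → B → X → Y → ℝ) : ℝ :=
  bellValue Bf P / localBound Bf

/-- The quantum correlation `P(a,b|x,y) = tr[ρ (E_{a|x} ⊗ E_{b|y})]`. -/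
def quantumCorr {ιA ιB A B X Y : Type} [Fintype ιA] [Fintype ιB]
    (ρ : Matrix (ιA × ιB) (ιA × ιB) ℂ) (EA : A → X → HMat ιA) (EB : B → Y → HMat ιB) :
    A → B → X → Y → ℝ :=
  fun a b x y => ((ρ * ((EA a x) ⊗ₖ (EB b y))).trace).re

/-- Largest Bell-inequality violation `LV(ρ, B)` over pairs of POVM families. -/
def LV {ιA ιB A B X Y : Type} [Fintype ιA] [Fintype ιB] [DecidableEq ιA] [DecidableEq ιB]
    [Fintype A] [Fintype B] [Fintype X] [Fintype Y]
    (ρ : Matrix (ιA × ιB) (ιA × ιB) ℂ) (Bf : A → B → X → Y → ℝ) : ℝ :=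
  sSup {r : ℝ | ∃ (EA : A → X → HMat ιA) (EB : B → Y → HMat ιB),
    IsPOVM EA ∧ IsPOVM EB ∧ r = nonlocalityFraction (quantumCorr ρ EA EB) Bf}

/-- Largest Bell-inequality violation `LV^π(ρ, B)` over pairs of projective families. -/
def LVProj {ιA ιB A B X Y : Type} [Fintype ιA] [Fintype ιB] [DecidableEq ιA] [DecidableEq ιB]
    [Fintype A] [Fintype B] [Fintype X] [Fintype Y]
    (ρ : Matrix (ιA × ιB) (ιA × ιB) ℂ) (Bf : A → B → X → Y → ℝ) : ℝ :=
  sSup {r : ℝ | ∃ (EA : A → X → HMat ιA) (EB : B → Y → HMat ιB),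
    IsProjPOVM EA ∧ IsProjPOVM EB ∧ r = nonlocalityFraction (quantumCorr ρ EA EB) Bf}

/-- The steering functional induced by a Bell functional and Bob's POVMs:
`F_{a|x} = ∑_{b,y} B_{ab|xy} E_{b|y}`. -/
def inducedF {ιB A B X Y : Type} [Fintype B] [Fintype Y]
    (Bf : A → B → X → Y → ℝ) (EB : B → Y → HMat ιB) : A → X → HMat ιB :=
  fun a x => ∑ y, ∑ b, Bf a b x y • EB b y

/-- The `k`-fold tensor power of a bipartite state, regrouped as a bipartite state on
`ℂ^{d^k} ⊗ ℂ^{d^k}` (Alice's factors grouped together, likewise Bob's). -/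
def tensorPower {ι : Type} (ρ : Matrix (ι × ι) (ι × ι) ℂ) (k : ℕ) :
    Matrix ((Fin k → ι) × (Fin k → ι)) ((Fin k → ι) × (Fin k → ι)) ℂ :=
  Matrix.of fun p q => ∏ t, ρ (p.1 t, p.2 t) (q.1 t, q.2 t)

/-- The isotropic state `ρ_iso(p) = p |Ψ⁺⟩⟨Ψ⁺| + (1-p) I/d²` on `ℂ^d ⊗ ℂ^d`. -/
def iso (d : ℕ) (p : ℝ) : Matrix (Fin d × Fin d) (Fin d × Fin d) ℂ :=
  p • maxEnt (Fin d) + ((1 - p) / (d : ℝ) ^ 2) • (1 : Matrix (Fin d × Fin d) (Fin d × Fin d) ℂ)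

/-- `sup_F Γ_s(σ, F)` over positive semidefinite steering functionals with positive
steering bound. -/
def supFrac {ι A X : Type} [Fintype ι] [Fintype A] [Fintype X] (σ : A → X → HMat ι) : ℝ :=
  sSup {r : ℝ | ∃ F : A → X → HMat ι, IsSteeringFunctional F ∧ 0 < steeringBound F ∧
    r = steeringFraction σ F}

/-- The optimal steering fraction `S_O(σ) = max{0, sup_F Γ_s(σ, F) − 1}`. -/
def SO {ι A X : Type} [Fintype ι] [Fintype A] [Fintype X] (σ : A → X → HMat ι) : ℝ :=
  max 0 (supFrac σ - 1)

/-- The steerable weight `S_W(σ)`. -/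
def SW {ι A X : Type} [Fintype ι] [Fintype A] [Fintype X] (σ : A → X → HMat ι) : ℝ :=
  sInf {ν : ℝ | 0 ≤ ν ∧ ν ≤ 1 ∧ ∃ σUS σS : A → X → HMat ι,
    IsAssemblage σUS ∧ IsUnsteerable σUS ∧ IsAssemblage σS ∧
    ∀ a x, σ a x = (1 - ν) • σUS a x + ν • σS a x}

/-- The steering robustness `S_R(σ)`. -/
def SR {ι A X : Type} [Fintype ι] [Fintype A] [Fintype X] (σ : A → X → HMat ι) : ℝ :=
  sInf {ν : ℝ | 0 ≤ ν ∧ ∃ τ : A → X → HMat ι, IsAssemblage τ ∧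
    IsUnsteerable (fun a x => (1 / (1 + ν)) • σ a x + (ν / (1 + ν)) • τ a x)}

/-- Separability of a bipartite state. -/
def IsSeparable {ιA ιB : Type} [Fintype ιA] [Fintype ιB]
    (ρ : Matrix (ιA × ιB) (ιA × ιB) ℂ) : Prop :=
  ∃ (n : ℕ) (w : Fin n → ℝ) (ρA : Fin n → HMat ιA) (ρB : Fin n → HMat ιB),
    (∀ l, 0 ≤ w l) ∧ (∑ l, w l = 1) ∧ (∀ l, IsDensity (ρA l)) ∧ (∀ l, IsDensity (ρB l)) ∧
    ρ = ∑ l, w l • ((ρA l) ⊗ₖ (ρB l))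

/-- The (unnormalized) output assemblage of a one-way LOCC subchannel acting on an
assemblage: `M(σ)_{a'|x'} = K (∑_{a,x} P(x|x') P(a'|x',a,x) σ_{a|x}) K†`. -/
def wired {ι ι₂ A X A' X' : Type} [Fintype ι] [Fintype A] [Fintype X]
    (K : Matrix ι₂ ι ℂ) (Px : X → X' → ℝ) (Pa : A' → X' → A → X → ℝ)
    (σ : A → X → HMat ι) : A' → X' → HMat ι₂ :=
  fun a' x' => K * (∑ x, ∑ a, (Px x x' * Pa a' x' a x) • σ a x) * Kᴴ

instance matMeasurableSpace {m n : Type} : MeasurableSpace (Matrix m n ℂ) :=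
  inferInstanceAs (MeasurableSpace (m → n → ℂ))

/-- The `(U ⊗ U*)`-twirl of a bipartite state with respect to a measure `μ` on the
unitary group (entrywise Bochner integral). -/
def twirl {ι : Type} [Fintype ι] [DecidableEq ι]
    (μ : Measure (Matrix.unitaryGroup ι ℂ)) (ρ : Matrix (ι × ι) (ι × ι) ℂ) :
    Matrix (ι × ι) (ι × ι) ℂ :=
  Matrix.of fun p q =>
    ∫ V : Matrix.unitaryGroup ι ℂ,
      ((((V : Matrix ι ι ℂ)) ⊗ₖ ((V : Matrix ι ι ℂ).map (starRingEnd ℂ))) * ρ *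
        ((((V : Matrix ι ι ℂ)) ⊗ₖ ((V : Matrix ι ι ℂ).map (starRingEnd ℂ)))ᴴ)) p q ∂μ

/-! Measuring Bob's side of an assemblage `σ` with `E_B` produces the correlation
`tr(E_{b|y} σ_{a|x})`, and the steering value of `F_(B;E_B)` on `σ` is the Bell value of that
correlation. For the assemblage induced by `ρ` and `E_A` this correlation is the quantum
correlation `P`, while for an unsteerable `σ` it is local, so `ω_s(F_(B;E_B)) ≤ ω(B)`. As the
common numerator `∑ B_{ab|xy} P(a,b|x,y)` is nonnegative, dividing it by the smaller positive
bound gives the larger fraction. -/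

theorem _root_.Matrix.PosSemidef.trace_mul_nonneg {n : Type} [Fintype n] {M N : Matrix n n ℂ}
    (hM : M.PosSemidef) (hN : N.PosSemidef) : 0 ≤ (M * N).trace := by
  classical
  open scoped MatrixOrder in
  obtain ⟨C, rfl⟩ := CStarAlgebra.nonneg_iff_eq_star_mul_self.mp hM.nonneg
  rw [Matrix.star_eq_conjTranspose, Matrix.mul_assoc, Matrix.trace_mul_comm]
  exact (hN.mul_mul_conjTranspose_same C).trace_nonneg

theorem trace_mul_ptraceA {ιA ιB : Type} [Fintype ιA] [Fintype ιB] [DecidableEq ιA]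
    (N : Matrix (ιA × ιB) (ιA × ιB) ℂ) (M : HMat ιB) :
    (M * ptraceA N).trace = (N * ((1 : HMat ιA) ⊗ₖ M)).trace := by
  simp only [Matrix.trace, Matrix.diag, Matrix.mul_apply, ptraceA, Matrix.of_apply,
    Matrix.kroneckerMap_apply, Matrix.one_apply, Fintype.sum_prod_type_right, ite_mul, one_mul,
    zero_mul, mul_ite, mul_zero, Finset.mul_sum, Finset.sum_ite_eq', Finset.mem_univ, if_true]
  rw [Finset.sum_comm]
  refine Finset.sum_congr rfl fun j _ => ?_
  rw [Finset.sum_comm]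
  exact Finset.sum_congr rfl fun _ _ => Finset.sum_congr rfl fun _ _ => mul_comm _ _

theorem trace_mul_inducedAssemblage {ιA ιB A X : Type} [Fintype ιA] [Fintype ιB]
    [DecidableEq ιA] [DecidableEq ιB]
    (ρ : Matrix (ιA × ιB) (ιA × ιB) ℂ) (E : A → X → HMat ιA) (M : HMat ιB) (a : A) (x : X) :
    (M * inducedAssemblage ρ E a x).trace = (ρ * (E a x ⊗ₖ M)).trace := by
  rw [inducedAssemblage, trace_mul_ptraceA, Matrix.mul_assoc, ← Matrix.mul_kronecker_mul,
    Matrix.mul_one, Matrix.one_mul]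

def bobCorr {ιB A B X Y : Type} [Fintype ιB] (EB : B → Y → HMat ιB) (σ : A → X → HMat ιB) :
    A → B → X → Y → ℝ :=
  fun a b x y => ((EB b y * σ a x).trace).re

theorem steeringValue_inducedF {ιB A B X Y : Type} [Fintype ιB] [Fintype A] [Fintype B]
    [Fintype X] [Fintype Y] (Bf : A → B → X → Y → ℝ) (EB : B → Y → HMat ιB)
    (σ : A → X → HMat ιB) :
    steeringValue (inducedF Bf EB) σ = bellValue Bf (bobCorr EB σ) := by
  simp only [steeringValue, bellValue, bobCorr, inducedF, Finset.sum_mul, Matrix.smul_mul,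
    Matrix.trace_sum, Matrix.trace_smul, Complex.re_sum, Complex.real_smul,
    Complex.re_ofReal_mul]
  exact Finset.sum_congr rfl fun x _ => Finset.sum_comm

theorem bobCorr_inducedAssemblage {ιA ιB A B X Y : Type} [Fintype ιA] [Fintype ιB]
    [DecidableEq ιA] [DecidableEq ιB]
    (ρ : Matrix (ιA × ιB) (ιA × ιB) ℂ) (EA : A → X → HMat ιA) (EB : B → Y → HMat ιB) :
    bobCorr EB (inducedAssemblage ρ EA) = quantumCorr ρ EA EB := by
  ext a b x y
  rw [bobCorr, quantumCorr, trace_mul_inducedAssemblage]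

theorem IsUnsteerable.isLHV_bobCorr {ιB A B X Y : Type} [Fintype ιB] [DecidableEq ιB]
    [Fintype A] [Fintype B] {EB : B → Y → HMat ιB} (hEB : IsPOVM EB) {σ : A → X → HMat ιB}
    (hσ : IsUnsteerable σ) : IsLHV (bobCorr EB σ) := by
  obtain ⟨n, w, p, τ, hw0, hw1, hp0, hp1, hτ, hστ⟩ := hσ
  obtain rfl : σ = fun a x => ∑ l, (w l * p a x l) • τ l := funext₂ hστ
  refine ⟨n, w, p, fun b y l => ((EB b y * τ l).trace).re, hw0, hw1, hp0, hp1,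
    fun b y l => (Complex.nonneg_iff.mp ((hEB.1 b y).trace_mul_nonneg (hτ l).1)).1,
    fun y l => ?_, fun a b x y => ?_⟩
  · rw [← Complex.re_sum, ← Matrix.trace_sum, ← Finset.sum_mul, hEB.2 y, Matrix.one_mul,
      (hτ l).2, Complex.one_re]
  · simp only [bobCorr, Matrix.mul_sum, Matrix.mul_smul, Matrix.trace_sum, Matrix.trace_smul,
      Complex.re_sum, Complex.real_smul, Complex.re_ofReal_mul, mul_assoc]

theorem IsLHV.le_one {A B X Y : Type} [Fintype A] [Fintype B] {P : A → B → X → Y → ℝ}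
    (hP : IsLHV P) (a : A) (b : B) (x : X) (y : Y) : P a b x y ≤ 1 := by
  obtain ⟨n, w, pA, pB, hw0, hw1, hA0, hA1, hB0, hB1, hPw⟩ := hP
  rw [hPw]
  have hA : ∀ l, pA a x l ≤ 1 := fun l =>
    hA1 x l ▸ Finset.single_le_sum (fun a' _ => hA0 a' x l) (Finset.mem_univ a)
  have hB : ∀ l, pB b y l ≤ 1 := fun l =>
    hB1 y l ▸ Finset.single_le_sum (fun b' _ => hB0 b' y l) (Finset.mem_univ b)
  calc ∑ l, w l * pA a x l * pB b y l ≤ ∑ l, w l := Finset.sum_le_sum fun l _ =>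
        mul_le_of_le_one_right (mul_nonneg (hw0 l) (hA0 a x l)) (hB l) |>.trans
          (mul_le_of_le_one_right (hw0 l) (hA l))
    _ = 1 := hw1

theorem bellValue_le_localBound {A B X Y : Type} [Fintype A] [Fintype B] [Fintype X]
    [Fintype Y] {Bf : A → B → X → Y → ℝ} (hBf : ∀ a b x y, 0 ≤ Bf a b x y)
    {P : A → B → X → Y → ℝ} (hP : IsLHV P) : bellValue Bf P ≤ localBound Bf := by
  have hbdd : BddAbove {r : ℝ | ∃ P : A → B → X → Y → ℝ, IsLHV P ∧ r = bellValue Bf P} := by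
    refine ⟨∑ x, ∑ y, ∑ a, ∑ b, Bf a b x y, ?_⟩
    rintro _ ⟨Q, hQ, rfl⟩
    unfold bellValue
    gcongr with x _ y _ a _ b _
    exact mul_le_of_le_one_right (hBf a b x y) (hQ.le_one a b x y)
  exact le_csSup hbdd ⟨P, hP, rfl⟩

theorem steeringBound_inducedF_le_localBound {ιB A B X Y : Type} [Fintype ιB] [DecidableEq ιB]
    [Fintype A] [Fintype B] [Fintype X] [Fintype Y] {Bf : A → B → X → Y → ℝ}
    (hBf : ∀ a b x y, 0 ≤ Bf a b x y) (hω : 0 ≤ localBound Bf)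
    {EB : B → Y → HMat ιB} (hEB : IsPOVM EB) :
    steeringBound (inducedF Bf EB) ≤ localBound Bf := by
  refine Real.sSup_le ?_ hω
  rintro _ ⟨σ, -, hσ, rfl⟩
  rw [steeringValue_inducedF]
  exact bellValue_le_localBound hBf (hσ.isLHV_bobCorr hEB)

theorem bellValue_quantumCorr_nonneg {ιA ιB A B X Y : Type} [Fintype ιA] [Fintype ιB]
    [DecidableEq ιA] [DecidableEq ιB] [Fintype A] [Fintype B] [Fintype X] [Fintype Y]
    {ρ : Matrix (ιA × ιB) (ιA × ιB) ℂ} (hρ : ρ.PosSemidef)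
    {EA : A → X → HMat ιA} (hEA : IsPOVM EA) {EB : B → Y → HMat ιB} (hEB : IsPOVM EB)
    {Bf : A → B → X → Y → ℝ} (hBf : ∀ a b x y, 0 ≤ Bf a b x y) :
    0 ≤ bellValue Bf (quantumCorr ρ EA EB) := by
  refine Finset.sum_nonneg fun x _ => Finset.sum_nonneg fun y _ =>
    Finset.sum_nonneg fun a _ => Finset.sum_nonneg fun b _ => mul_nonneg (hBf a b x y) ?_
  exact (Complex.nonneg_iff.mp (hρ.trace_mul_nonneg ((hEA.1 a x).kronecker (hEB.1 b y)))).1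

theorem stmt1_general {A B X Y : Type} [Fintype A] [Fintype B] [Fintype X] [Fintype Y]
    (dA dB : ℕ)
    (ρ : Matrix (Fin dA × Fin dB) (Fin dA × Fin dB) ℂ) (hρ : IsDensity ρ)
    (EA : A → X → HMat (Fin dA)) (hEA : IsPOVM EA)
    (EB : B → Y → HMat (Fin dB)) (hEB : IsPOVM EB)
    (Bf : A → B → X → Y → ℝ) (hBf : ∀ a b x y, 0 ≤ Bf a b x y)
    (hω : 0 < localBound Bf)
    (hωs : 0 < steeringBound (inducedF Bf EB)) :
    nonlocalityFraction (quantumCorr ρ EA EB) Bf ≤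
      steeringFraction (inducedAssemblage ρ EA) (inducedF Bf EB) := by
  rw [nonlocalityFraction, steeringFraction, steeringValue_inducedF, bobCorr_inducedAssemblage]
  exact div_le_div_of_nonneg_left (bellValue_quantumCorr_nonneg hρ.1 hEA hEB hBf) hωs
    (steeringBound_inducedF_le_localBound hBf hω.le hEB)

/-- the nonlocality fraction is bounded by the steering fraction of the
induced steering functional: `Γ(P, B) ≤ Γ_s({ρ, E_A}, F_(B;E_B))`. -/
theorem stmt1 {A B X Y : Type} [Fintype A] [Fintype B] [Fintype X] [Fintype Y]
    [Nonempty A] [Nonempty B] [Nonempty X] [Nonempty Y]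
    (dA dB : ℕ) (hdA : 0 < dA) (hdB : 0 < dB)
    (ρ : Matrix (Fin dA × Fin dB) (Fin dA × Fin dB) ℂ) (hρ : IsDensity ρ)
    (EA : A → X → HMat (Fin dA)) (hEA : IsPOVM EA)
    (EB : B → Y → HMat (Fin dB)) (hEB : IsPOVM EB)
    (Bf : A → B → X → Y → ℝ) (hBf : ∀ a b x y, 0 ≤ Bf a b x y)
    (hω : 0 < localBound Bf)
    (hωs : 0 < steeringBound (inducedF Bf EB)) :
    nonlocalityFraction (quantumCorr ρ EA EB) Bf ≤
      steeringFraction (inducedAssemblage ρ EA) (inducedF Bf EB) :=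
  stmt1_general dA dB ρ hρ EA hEA EB hEB Bf hBf hω hωs

end QSteer

end
end

section
/- For every integer d ≥ 2, the bound d² / (H_d + H_d·d − d) ≤ 1.09 · d / ln d holds, where H_d = ∑_{n=1}^d 1/n is the d-th harmonic number; equivalently, the function d ↦ (ln d) / (H_d + H_d·d − d), defined on integers d ≥ 2, is bounded above by 1.09/d, with its maximum of d·(ln d)/(H_d + H_d·d − d) attained at d = 48. -/
open scoped ComplexOrder Kronecker Matrix
open MeasureTheory

noncomputable section

namespace QSteer

/-! Write `D d = H_d + H_d·d − d = (d + 1)·H_d − d`. Both claims follow from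
`d·log d·D 48 ≤ 48·log 48·D d` for `d ≥ 2` together with `48·log 48 ≤ 1.09·D 48`.

For `d ≥ 180`, the trapezoid bound `log (n + 1) − log n ≤ (1/n + 1/(n+1))/2` makes
`H_d − 1/(2d) − log d` increasing, so `log d ≤ H_d − H_180 + log 180 + 1/360`; since
`48·log 48 > D 48`, the right-hand side `48·log 48·((d + 1)·H_d − d)` then wins.
For `2 ≤ d < 180` the inequality is a finite computation. Near the peak it is very tight
(`d = 47, 49` miss the maximum by less than `5·10⁻⁶`), so `log 48` and `log (d/48)` are enclosed
by truncations of `log y = 2 artanh ((y − 1)/(y + 1))`, which turns each case into a comparison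
of rationals decided by evaluation. -/

def logSeries {K : Type*} [Field K] (n : ℕ) (y : K) : K :=
  ∑ k ∈ Finset.range n, 2 * (1 / (2 * k + 1)) * ((y - 1) / (y + 1)) ^ (2 * k + 1)

def logSeriesTail {K : Type*} [Field K] (n : ℕ) (y : K) : K :=
  2 * ((y - 1) / (y + 1)) ^ (2 * n + 1) / ((2 * n + 1) * (1 - ((y - 1) / (y + 1)) ^ 2))

@[simp, norm_cast]
theorem cast_logSeries (n : ℕ) (y : ℚ) : ((logSeries n y : ℚ) : ℝ) = logSeries n (y : ℝ) := by
  simp [logSeries]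

@[simp, norm_cast]
theorem cast_logSeriesTail (n : ℕ) (y : ℚ) :
    ((logSeriesTail n y : ℚ) : ℝ) = logSeriesTail n (y : ℝ) := by
  simp [logSeriesTail]

theorem hasSum_logSeries {y : ℝ} (hy : 1 ≤ y) :
    HasSum (fun k : ℕ => 2 * (1 / (2 * k + 1)) * ((y - 1) / (y + 1)) ^ (2 * k + 1))
      (Real.log y) := by
  have h := Real.hasSum_log_one_add (a := y - 1) (by linarith)
  rwa [add_sub_cancel, show y - 1 + 2 = y + 1 by ring] at h

theorem logSeries_le_log {y : ℝ} (hy : 1 ≤ y) (n : ℕ) : logSeries n y ≤ Real.log y :=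
  sum_le_hasSum _ (fun _ _ => by
    have : 0 ≤ (y - 1) / (y + 1) := div_nonneg (by linarith) (by linarith)
    positivity) (hasSum_logSeries hy)

theorem log_le_logSeries_add_tail {y : ℝ} (hy : 1 ≤ y) (n : ℕ) :
    Real.log y ≤ logSeries n y + logSeriesTail n y := by
  set z := (y - 1) / (y + 1) with hz
  have hz0 : 0 ≤ z := div_nonneg (by linarith) (by linarith)
  have hz2 : z ^ 2 < 1 := by
    have : z < 1 := (div_lt_one (by linarith)).2 (by linarith)
    nlinarith
  have htail := (hasSum_nat_add_iff' n).2 (hasSum_logSeries hy)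
  have hgeom := (hasSum_geometric_of_lt_one (by positivity) hz2).mul_left
    (2 * z ^ (2 * n + 1) / (2 * n + 1))
  have := hasSum_le (fun k => ?_) htail hgeom
  · rw [logSeriesTail, logSeries, ← hz, ← div_div, div_eq_mul_inv _ (1 - z ^ 2)]
    linarith
  · have hpow : z ^ (2 * (k + n) + 1) = z ^ (2 * n + 1) * (z ^ 2) ^ k := by
      rw [← pow_mul, ← pow_add]; ring_nf
    calc _ = 2 * (z ^ (2 * n + 1) * (z ^ 2) ^ k) / (2 * ((k + n : ℕ) : ℝ) + 1) := by
          rw [← hz, hpow]; ring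
      _ ≤ 2 * (z ^ (2 * n + 1) * (z ^ 2) ^ k) / (2 * n + 1) := by gcongr; linarith
      _ = _ := by ring

theorem log_le_sub_inv_div_two {y : ℝ} (hy : 1 ≤ y) : Real.log y ≤ (y - y⁻¹) / 2 := by
  rw [← Real.sinh_log (by linarith)]
  exact Real.self_le_sinh_iff.2 (Real.log_nonneg hy)

theorem log_succ_sub_log_le {n : ℕ} (hn : 0 < n) :
    Real.log (n + 1) - Real.log n ≤ (1 / n + 1 / (n + 1)) / 2 := by
  have hn' : (0 : ℝ) < n := by exact_mod_cast hn
  have h := log_le_sub_inv_div_two (y := (n + 1) / n) (by rw [le_div_iff₀ hn']; linarith)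
  rw [Real.log_div (by positivity) hn'.ne'] at h
  convert h using 1
  field_simp
  ring

theorem harmonic_le_harmonic {m n : ℕ} (h : m ≤ n) : harmonic m ≤ harmonic n :=
  Finset.sum_le_sum_of_subset_of_nonneg (Finset.range_subset_range.2 h) fun _ _ _ => by
    positivity

theorem one_le_harmonic {n : ℕ} (hn : 0 < n) : 1 ≤ harmonic n := by
  simpa using harmonic_le_harmonic hn

theorem log_sub_log_le_harmonic_sub {m d : ℕ} (hm : 0 < m) (hmd : m ≤ d) :
    Real.log d - Real.log m ≤
      ((harmonic d : ℝ) - 1 / (2 * d)) - ((harmonic m : ℝ) - 1 / (2 * m)) := by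
  induction d, hmd using Nat.le_induction with
  | base => simp
  | succ n hmn ih =>
    have hstep := log_succ_sub_log_le (hm.trans_le hmn)
    have e : (1 / (n : ℝ) + 1 / (n + 1)) / 2 =
        1 / (2 * n) + ((n : ℝ) + 1)⁻¹ - 1 / (2 * (n + 1)) := by
      field_simp
      ring
    push_cast [harmonic_succ]
    linarith

def harmonicDenom (d : ℕ) : ℚ := harmonic d + harmonic d * d - d

theorem harmonicDenom_pos {d : ℕ} (hd : 0 < d) : 0 < harmonicDenom d := by
  have h := one_le_harmonic hd
  have : (0 : ℚ) ≤ (harmonic d - 1) * d := mul_nonneg (by linarith) (by positivity)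
  rw [harmonicDenom]
  nlinarith

theorem cast_harmonicDenom (d : ℕ) :
    ((harmonicDenom d : ℚ) : ℝ) = (harmonic d : ℝ) + (harmonic d : ℝ) * d - d := by
  push_cast [harmonicDenom]
  rfl

def log48Lower : ℚ := 5 * 0.6931471803 + logSeries 3 (3 / 2)

def log48Upper : ℚ := 5 * 0.6931471808 + logSeries 3 (3 / 2) + logSeriesTail 3 (3 / 2)

theorem log_48_eq : Real.log 48 = 5 * Real.log 2 + Real.log (3 / 2) := by
  rw [show (48 : ℝ) = 2 ^ 5 * (3 / 2) by norm_num, Real.log_mul (by norm_num) (by norm_num),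
    Real.log_pow]
  norm_num

theorem log48Lower_le : (log48Lower : ℝ) ≤ Real.log 48 := by
  have := logSeries_le_log (y := 3 / 2) (by norm_num) 3
  have := Real.log_two_gt_d9
  rw [log_48_eq, log48Lower]
  push_cast
  linarith

theorem le_log48Upper : Real.log 48 ≤ log48Upper := by
  have := log_le_logSeries_add_tail (y := 3 / 2) (by norm_num) 3
  have := Real.log_two_lt_d9
  rw [log_48_eq, log48Upper]
  push_cast
  linarith

def logRatioUpper (d : ℕ) : ℚ :=
  if d ≤ 48 then -logSeries 3 (48 / d : ℚ)
  else logSeries 3 (d / 48 : ℚ) + logSeriesTail 3 (d / 48 : ℚ)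

theorem log_div_le_logRatioUpper {d : ℕ} (hd : 0 < d) :
    Real.log (d / 48) ≤ logRatioUpper d := by
  have hd' : (0 : ℝ) < d := by exact_mod_cast hd
  rw [logRatioUpper]
  split_ifs with h48
  · have h48' : (d : ℝ) ≤ 48 := by exact_mod_cast h48
    have := logSeries_le_log (y := 48 / d) (by rw [le_div_iff₀ hd']; linarith) 3
    rw [← inv_div, Real.log_inv]
    push_cast
    linarith
  · have h48' : (48 : ℝ) ≤ d := by exact_mod_cast (not_le.1 h48).le
    push_cast
    exact log_le_logSeries_add_tail (by rw [le_div_iff₀ (by norm_num)]; linarith) 3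

/-- With `log d = log 48 + log (d/48)`, the inequality `d·log d·D 48 ≤ 48·log 48·D d` is
linear in `log 48`, so it suffices to check it at both ends of `[log48Lower, log48Upper]`. -/
def PeakCert (d : ℕ) : Prop :=
  d * harmonicDenom 48 * logRatioUpper d ≤
    min (log48Lower * (48 * harmonicDenom d - d * harmonicDenom 48))
      (log48Upper * (48 * harmonicDenom d - d * harmonicDenom 48))

instance : DecidablePred PeakCert := fun _ => inferInstanceAs (Decidable (_ ≤ _))

theorem peak_of_peakCert {d : ℕ} (hd : 0 < d) (hc : PeakCert d) :
    (d : ℝ) * Real.log d * harmonicDenom 48 ≤ 48 * Real.log 48 * harmonicDenom d := by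
  have hd' : (0 : ℝ) < d := by exact_mod_cast hd
  have hc' : (d : ℝ) * harmonicDenom 48 * logRatioUpper d ≤
      min ((log48Lower : ℝ) * (48 * (harmonicDenom d : ℝ) - d * (harmonicDenom 48 : ℝ)))
        ((log48Upper : ℝ) * (48 * (harmonicDenom d : ℝ) - d * (harmonicDenom 48 : ℝ))) := by
    unfold PeakCert at hc
    exact_mod_cast hc
  set h : ℝ := 48 * harmonicDenom d - d * harmonicDenom 48
  have hlin : min (log48Lower * h) (log48Upper * h) ≤ Real.log 48 * h := by
    rcases le_total 0 h with h0 | h0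
    · exact (min_le_left _ _).trans (mul_le_mul_of_nonneg_right log48Lower_le h0)
    · exact (min_le_right _ _).trans (mul_le_mul_of_nonpos_right le_log48Upper h0)
  have hM : (0 : ℝ) < harmonicDenom 48 := by exact_mod_cast harmonicDenom_pos (by norm_num)
  have hu := mul_le_mul_of_nonneg_left (log_div_le_logRatioUpper hd)
    (by positivity : (0 : ℝ) ≤ d * harmonicDenom 48)
  rw [Real.log_div hd'.ne' (by norm_num)] at hu
  linarith

theorem peakCert_of_lt : ∀ d, 2 ≤ d → d < 180 → PeakCert d := by
  decide +kernel

theorem harmonicDenom_48_lt : harmonicDenom 48 < 48 * log48Lower := by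
  decide +kernel

theorem harmonicDenom_48_mul_le : harmonicDenom 48 * (log48Upper + logRatioUpper 180 + 1 / 360) ≤
    48 * log48Lower * (harmonic 180 - 1) := by
  decide +kernel

theorem peak_of_le {d : ℕ} (hd : 180 ≤ d) :
    (d : ℝ) * Real.log d * harmonicDenom 48 ≤ 48 * Real.log 48 * harmonicDenom d := by
  have hlog : Real.log d ≤
      ((log48Upper + logRatioUpper 180 + 1 / 360 - harmonic 180 : ℚ) : ℝ) + harmonic d := by
    have hmono := log_sub_log_le_harmonic_sub (by norm_num) hd
    have h180 := log_div_le_logRatioUpper (d := 180) (by norm_num)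
    rw [Real.log_div (by norm_num) (by norm_num)] at h180
    have := le_log48Upper
    have : 0 ≤ 1 / (2 * (d : ℝ)) := by positivity
    push_cast at hmono h180 ⊢
    linarith
  have hH : ((harmonic 180 : ℚ) : ℝ) ≤ harmonic d := by exact_mod_cast harmonic_le_harmonic hd
  have hH1 : (1 : ℝ) ≤ (harmonic 180 : ℚ) := by exact_mod_cast one_le_harmonic (by norm_num)
  have hM : (0 : ℝ) ≤ (harmonicDenom 48 : ℚ) := by
    exact_mod_cast (harmonicDenom_pos (by norm_num)).le
  have hMK : ((harmonicDenom 48 : ℚ) : ℝ) < ((48 * log48Lower : ℚ) : ℝ) := by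
    exact_mod_cast harmonicDenom_48_lt
  have htail : ((harmonicDenom 48 * (log48Upper + logRatioUpper 180 + 1 / 360) : ℚ) : ℝ) ≤
      ((48 * log48Lower * (harmonic 180 - 1) : ℚ) : ℝ) := by
    exact_mod_cast harmonicDenom_48_mul_le
  have hlo := log48Lower_le
  have hd' : (0 : ℝ) ≤ d := by positivity
  push_cast at hlog hMK htail
  rw [cast_harmonicDenom d]
  linarith [mul_le_mul_of_nonneg_left hlog (mul_nonneg hd' hM),
    mul_nonneg (sub_nonneg.2 hH)
      (by nlinarith : 0 ≤ 48 * Real.log 48 * (d + 1) - d * (harmonicDenom 48 : ℝ)),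
    mul_nonneg hd' (sub_nonneg.2 htail),
    mul_nonneg hd' (mul_nonneg (sub_nonneg.2 hlo) (sub_nonneg.2 hH1)),
    mul_nonneg (by positivity : (0 : ℝ) ≤ 48 * Real.log 48) (by linarith : (0 : ℝ) ≤ harmonic 180)]

theorem peak_inequality {d : ℕ} (hd : 2 ≤ d) :
    (d : ℝ) * Real.log d * harmonicDenom 48 ≤ 48 * Real.log 48 * harmonicDenom d := by
  rcases lt_or_ge d 180 with h | h
  · exact peak_of_peakCert (by omega) (peakCert_of_lt d hd h)
  · exact peak_of_le h

theorem peak_value_le : 48 * Real.log 48 ≤ 1.09 * (harmonicDenom 48 : ℝ) := by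
  have h : 4800 * log48Upper ≤ 109 * harmonicDenom 48 := by decide +kernel
  have h' : 4800 * (log48Upper : ℝ) ≤ 109 * (harmonicDenom 48 : ℝ) := by exact_mod_cast h
  norm_num
  linarith [le_log48Upper]

/-- for every integer `d ≥ 2`,
`d² / (H_d + H_d·d − d) ≤ 1.09 · d / ln d`; equivalently the function
`d ↦ d·(ln d)/(H_d + H_d·d − d)` is bounded by `1.09`, with its maximum attained
at `d = 48`. -/
theorem stmt9 :
    (∀ d : ℕ, 2 ≤ d →
      (d : ℝ) ^ 2 / ((harmonic d : ℝ) + (harmonic d : ℝ) * d - d) ≤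
        1.09 * d / Real.log d) ∧
    (∀ d : ℕ, 2 ≤ d →
      (d : ℝ) * Real.log d / ((harmonic d : ℝ) + (harmonic d : ℝ) * d - d) ≤
        (48 : ℝ) * Real.log 48 /
          ((harmonic 48 : ℝ) + (harmonic 48 : ℝ) * 48 - 48)) := by
  have hM : (0 : ℝ) < harmonicDenom 48 := by exact_mod_cast harmonicDenom_pos (by norm_num)
  have hD {d : ℕ} (hd : 2 ≤ d) : (0 : ℝ) < harmonicDenom d := by
    exact_mod_cast harmonicDenom_pos (by omega)
  refine ⟨fun d hd => ?_, fun d hd => ?_⟩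
  · have hlog : 0 < Real.log d := Real.log_pos (by exact_mod_cast hd)
    have hbound : (d : ℝ) * Real.log d ≤ 1.09 * harmonicDenom d := by
      refine le_of_mul_le_mul_right ?_ hM
      nlinarith [peak_inequality hd, mul_le_mul_of_nonneg_right peak_value_le (hD hd).le]
    rw [← cast_harmonicDenom, div_le_div_iff₀ (hD hd) hlog]
    nlinarith
  · have e48 : (harmonicDenom 48 : ℝ) = (harmonic 48 : ℝ) + (harmonic 48 : ℝ) * 48 - 48 := by
      rw [cast_harmonicDenom]; norm_num
    rw [← e48, ← cast_harmonicDenom, div_le_div_iff₀ (hD hd) hM]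
    exact peak_inequality hd

end QSteer

end
end

section
/- The optimal steering fraction S_O is a convex function on assemblages that vanishes on unsteerable assemblages: (i) S_O(σ) = 0 for every unsteerable assemblage σ; (ii) for any two assemblages σ', σ'' (with the same index sets of settings and outcomes) and any μ ∈ [0,1], the assemblage σ with σ_{a|x} = μ σ'_{a|x} + (1 − μ) σ''_{a|x} satisfies S_O(σ) ≤ μ S_O(σ') + (1 − μ) S_O(σ''). -/
open scoped ComplexOrder Kronecker Matrix
open MeasureTheory

noncomputable section

namespace QSteer

/-
Both parts rest on the affinity of `σ ↦ ∑ tr(F_{a|x} σ_{a|x})`. On an unsteerable assemblage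
every steering fraction is at most `1` by the definition of `ω_s(F)`, so `S_O = 0`. For
convexity, the fraction of a mixture is the same mixture of fractions, each of which is bounded
by `S_O + 1`; the point is that these suprema are finite: every fraction of an assemblage is at
most `|A|`, since `σ_{a|x} ≤ ρ` for the reduced state `ρ = ∑_a σ_{a|x}`, and the assemblage
`ρ / |A|` is unsteerable.
-/

section PosSemidef

variable {ι : Type} [Fintype ι]

open scoped MatrixOrder in
theorem re_trace_mul_nonneg_of_posSemidef {M N : HMat ι} (hM : M.PosSemidef)
    (hN : N.PosSemidef) : 0 ≤ (M * N).trace.re := by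
  classical
  obtain ⟨C, rfl⟩ := CStarAlgebra.nonneg_iff_eq_star_mul_self.mp hN.nonneg
  rw [← Matrix.mul_assoc, Matrix.trace_mul_cycle]
  exact (Complex.nonneg_iff.mp (hM.mul_mul_conjTranspose_same C).trace_nonneg).1

theorem re_trace_mul_le_of_posSemidef_sub {F M N : HMat ι} (hF : F.PosSemidef)
    (hMN : (N - M).PosSemidef) : (F * M).trace.re ≤ (F * N).trace.re := by
  have := re_trace_mul_nonneg_of_posSemidef hF hMN
  rwa [Matrix.mul_sub, Matrix.trace_sub, Complex.sub_re, sub_nonneg] at this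

open scoped MatrixOrder in
theorem IsDensity.posSemidef_one_sub [DecidableEq ι] {ρ : HMat ι} (hρ : IsDensity ρ) :
    (1 - ρ).PosSemidef := by
  have hH := hρ.1.isHermitian
  rw [← Matrix.le_iff, CFC.le_one_iff (R := ℝ) ρ hH, hH.spectrum_real_eq_range_eigenvalues]
  rintro _ ⟨i, rfl⟩
  have hsum : ∑ j, hH.eigenvalues j = 1 := by
    have := hH.trace_eq_sum_eigenvalues
    rw [hρ.2] at this
    simpa using congrArg Complex.re this.symm
  exact hsum ▸ Finset.single_le_sum (fun j _ => hρ.1.eigenvalues_nonneg j) (Finset.mem_univ i)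

end PosSemidef

section Assemblage

variable {ι A X : Type} [Fintype ι] [Fintype A]

theorem IsAssemblage.isDensity_sum {σ : A → X → HMat ι} (hσ : IsAssemblage σ) (x : X) :
    IsDensity (∑ a, σ a x) :=
  ⟨Matrix.posSemidef_sum _ fun a _ => hσ.1 a x, hσ.2.2 x⟩

theorem IsAssemblage.nonempty {σ : A → X → HMat ι} (hσ : IsAssemblage σ) (x : X) :
    Nonempty A := by
  by_contra h
  have := (hσ.isDensity_sum x).2
  simp [not_nonempty_iff.mp h] at this

theorem IsAssemblage.posSemidef_sum_sub {σ : A → X → HMat ι} (hσ : IsAssemblage σ)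
    (a : A) (x : X) : (∑ a', σ a' x - σ a x).PosSemidef := by
  classical
  rw [← Finset.sum_erase_add _ _ (Finset.mem_univ a), add_sub_cancel_right]
  exact Matrix.posSemidef_sum _ fun a' _ => hσ.1 a' x

theorem IsAssemblage.posSemidef_one_sub [DecidableEq ι] {σ : A → X → HMat ι}
    (hσ : IsAssemblage σ) (a : A) (x : X) : (1 - σ a x).PosSemidef := by
  rw [← sub_add_sub_cancel _ (∑ a', σ a' x)]
  exact (hσ.isDensity_sum x).posSemidef_one_sub.add (hσ.posSemidef_sum_sub a x)

variable {p : A → X → ℝ} {ρ : HMat ι}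

theorem isAssemblage_smul_density (hp₀ : ∀ a x, 0 ≤ p a x) (hp₁ : ∀ x, ∑ a, p a x = 1)
    (hρ : IsDensity ρ) : IsAssemblage fun a x => p a x • ρ := by
  have hsum : ∀ x, ∑ a, p a x • ρ = ρ := fun x => by rw [← Finset.sum_smul, hp₁, one_smul]
  exact ⟨fun a x => hρ.1.smul (hp₀ a x), fun x x' => by rw [hsum, hsum],
    fun x => by rw [hsum, hρ.2]⟩

theorem isUnsteerable_smul_density (hp₀ : ∀ a x, 0 ≤ p a x) (hp₁ : ∀ x, ∑ a, p a x = 1)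
    (hρ : IsDensity ρ) : IsUnsteerable fun a x => p a x • ρ :=
  ⟨1, fun _ => 1, fun a x _ => p a x, fun _ => ρ, fun _ => zero_le_one, by simp,
    fun a x _ => hp₀ a x, fun x _ => hp₁ x, fun _ => hρ, fun a x => by simp⟩

end Assemblage

section SteeringValue

variable {ι A X : Type} [Fintype ι] [Fintype A] [Fintype X]

theorem steeringValue_add (F σ τ : A → X → HMat ι) :
    steeringValue F (fun a x => σ a x + τ a x) = steeringValue F σ + steeringValue F τ := by
  simp only [steeringValue, Matrix.mul_add, Matrix.trace_add, Complex.add_re,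
    Finset.sum_add_distrib]

theorem steeringValue_smul (F σ : A → X → HMat ι) (c : ℝ) :
    steeringValue F (fun a x => c • σ a x) = c * steeringValue F σ := by
  simp only [steeringValue, Matrix.mul_smul, Matrix.trace_smul, Complex.real_smul,
    Complex.re_ofReal_mul, Finset.mul_sum]

theorem steeringValue_mono {F σ τ : A → X → HMat ι} (hF : IsSteeringFunctional F)
    (hστ : ∀ a x, (τ a x - σ a x).PosSemidef) : steeringValue F σ ≤ steeringValue F τ :=
  Finset.sum_le_sum fun x _ => Finset.sum_le_sum fun a _ =>
    re_trace_mul_le_of_posSemidef_sub (hF a x) (hστ a x)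

theorem bddAbove_steeringValue_unsteerable {F : A → X → HMat ι}
    (hF : IsSteeringFunctional F) :
    BddAbove {r : ℝ | ∃ σ : A → X → HMat ι, IsAssemblage σ ∧ IsUnsteerable σ ∧
      r = steeringValue F σ} := by
  classical
  refine ⟨steeringValue F fun _ _ => 1, ?_⟩
  rintro r ⟨σ, hσ, -, rfl⟩
  exact steeringValue_mono hF hσ.posSemidef_one_sub

theorem steeringValue_le_steeringBound {F σ : A → X → HMat ι} (hF : IsSteeringFunctional F)
    (hσ : IsAssemblage σ) (hus : IsUnsteerable σ) : steeringValue F σ ≤ steeringBound F :=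
  le_csSup (bddAbove_steeringValue_unsteerable hF) ⟨σ, hσ, hus, rfl⟩

theorem steeringValue_le_card_mul_steeringBound {F σ : A → X → HMat ι}
    (hF : IsSteeringFunctional F) (hb : 0 ≤ steeringBound F) (hσ : IsAssemblage σ) :
    steeringValue F σ ≤ Fintype.card A * steeringBound F := by
  rcases isEmpty_or_nonempty X with hX | ⟨⟨x₀⟩⟩
  · simpa [steeringValue] using mul_nonneg (Nat.cast_nonneg _) hb
  have := hσ.nonempty x₀
  have hA : (Fintype.card A : ℝ) ≠ 0 := Nat.cast_ne_zero.mpr Fintype.card_ne_zero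
  obtain ⟨ρ, hρ_eq⟩ : ∃ ρ, ρ = ∑ a, σ a x₀ := ⟨_, rfl⟩
  have hρ : IsDensity ρ := hρ_eq ▸ hσ.isDensity_sum x₀
  have hp₀ : ∀ (_ : A) (_ : X), (0 : ℝ) ≤ (Fintype.card A : ℝ)⁻¹ := fun _ _ => by positivity
  have hp₁ : ∀ _ : X, ∑ _ : A, (Fintype.card A : ℝ)⁻¹ = 1 := fun _ => by
    rw [Finset.sum_const, Finset.card_univ, nsmul_eq_mul, mul_inv_cancel₀ hA]
  have hσρ : ∀ a x, (ρ - σ a x).PosSemidef := fun a x => by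
    rw [hρ_eq, ← hσ.2.1 x x₀]
    exact hσ.posSemidef_sum_sub a x
  calc steeringValue F σ
      ≤ steeringValue F fun _ _ => ρ := steeringValue_mono hF hσρ
    _ = Fintype.card A * steeringValue F fun _ _ => (Fintype.card A : ℝ)⁻¹ • ρ := by
        rw [steeringValue_smul, mul_inv_cancel_left₀ hA]
    _ ≤ Fintype.card A * steeringBound F :=
        mul_le_mul_of_nonneg_left (steeringValue_le_steeringBound hF
          (isAssemblage_smul_density hp₀ hp₁ hρ) (isUnsteerable_smul_density hp₀ hp₁ hρ))
          (Nat.cast_nonneg _)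

end SteeringValue

section OptimalSteeringFraction

variable {ι A X : Type} [Fintype ι] [Fintype A] [Fintype X]

theorem bddAbove_steeringFraction {σ : A → X → HMat ι} (hσ : IsAssemblage σ) :
    BddAbove {r : ℝ | ∃ F : A → X → HMat ι, IsSteeringFunctional F ∧
      0 < steeringBound F ∧ r = steeringFraction σ F} := by
  refine ⟨Fintype.card A, ?_⟩
  rintro r ⟨F, hF, hb, rfl⟩
  rw [steeringFraction, div_le_iff₀ hb]
  exact steeringValue_le_card_mul_steeringBound hF hb.le hσ

theorem steeringFraction_le_SO_add_one {F σ : A → X → HMat ι} (hF : IsSteeringFunctional F)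
    (hb : 0 < steeringBound F) (hσ : IsAssemblage σ) : steeringFraction σ F ≤ SO σ + 1 := by
  have : steeringFraction σ F ≤ supFrac σ :=
    le_csSup (bddAbove_steeringFraction hσ) ⟨F, hF, hb, rfl⟩
  have : supFrac σ - 1 ≤ SO σ := le_max_right _ _
  linarith

theorem SO_eq_zero_of_isUnsteerable {σ : A → X → HMat ι} (hσ : IsAssemblage σ)
    (hus : IsUnsteerable σ) : SO σ = 0 := by
  refine max_eq_left (sub_nonpos.mpr (Real.sSup_le ?_ zero_le_one))
  rintro r ⟨F, hF, hb, rfl⟩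
  rw [steeringFraction, div_le_one hb]
  exact steeringValue_le_steeringBound hF hσ hus

theorem steeringFraction_smul_add_smul (σ τ F : A → X → HMat ι) (μ ν : ℝ) :
    steeringFraction (fun a x => μ • σ a x + ν • τ a x) F =
      μ * steeringFraction σ F + ν * steeringFraction τ F := by
  simp only [steeringFraction, steeringValue_add F (fun a x => μ • σ a x),
    steeringValue_smul]
  ring

end OptimalSteeringFraction

/-- Lemma 2: the optimal steering fraction `S_O` vanishes on unsteerable
assemblages and is convex on assemblages. -/
theorem stmt10 {ι A X : Type} [Fintype ι] [Fintype A] [Fintype X] :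
    (∀ σ : A → X → HMat ι, IsAssemblage σ → IsUnsteerable σ → SO σ = 0) ∧
    (∀ (σ' σ'' : A → X → HMat ι) (μ : ℝ), IsAssemblage σ' → IsAssemblage σ'' →
      0 ≤ μ → μ ≤ 1 →
      SO (fun a x => μ • σ' a x + (1 - μ) • σ'' a x) ≤
        μ * SO σ' + (1 - μ) * SO σ'') := by
  refine ⟨fun σ hσ hus => SO_eq_zero_of_isUnsteerable hσ hus, ?_⟩
  intro σ' σ'' μ hσ' hσ'' hμ₀ hμ₁
  have hμ₁' : 0 ≤ 1 - μ := sub_nonneg.mpr hμ₁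
  have hSO' : 0 ≤ SO σ' := le_max_left _ _
  have hSO'' : 0 ≤ SO σ'' := le_max_left _ _
  refine max_le (by positivity) (sub_le_iff_le_add.mpr (Real.sSup_le ?_ (by nlinarith)))
  rintro r ⟨F, hF, hb, rfl⟩
  rw [steeringFraction_smul_add_smul]
  nlinarith [steeringFraction_le_SO_add_one hF hb hσ',
    steeringFraction_le_SO_add_one hF hb hσ'']

end QSteer

end
end
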